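/- Define, for λ > 2 and ν > 2, ρ_min(λ,ν) = −(λ/(2λ−1))·√((λ−2)/λ)·√((ν−2)/ν). Then ρ_min(λ,ν) is strictly decreasing in λ on (2,∞) for each fixed ν > 2, strictly decreasing in ν on (2,∞) for each fixed λ > 2, and inf over λ > 2, ν > 2 of ρ_min(λ,ν) = lim_{λ,ν→∞} ρ_min(λ,ν) = −1/2. In particular, −1/2 ≤ ρ_min(λ,ν) ≤ 0 for all λ, ν > 2. -/

import Mathlib

/-- Minimal Pearson correlation of the Lomax accelerated failure conditionals
model (at dependence parameter `τ = 1`):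
`ρ_min(λ,ν) = −(λ/(2λ−1))·√((λ−2)/λ)·√((ν−2)/ν)`. -/
noncomputable def lomaxRhoMin (l ν : ℝ) : ℝ :=
  -(l / (2 * l - 1)) * Real.sqrt ((l - 2) / l) * Real.sqrt ((ν - 2) / ν)

namespace LomaxAux

noncomputable def F (l : ℝ) : ℝ := l / (2 * l - 1) * Real.sqrt ((l - 2) / l)
noncomputable def G (ν : ℝ) : ℝ := Real.sqrt ((ν - 2) / ν)

lemma lomax_eq (l ν : ℝ) : lomaxRhoMin l ν = -(F l * G ν) := by
  unfold lomaxRhoMin F G; ring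

lemma F_eq {l : ℝ} (hl : 2 < l) :
    F l = Real.sqrt (l * (l - 2) / (2 * l - 1) ^ 2) := by
  have h1 : (0:ℝ) < l := by linarith
  have h2 : (0:ℝ) < 2 * l - 1 := by linarith
  have h3 : (0:ℝ) ≤ (l - 2) / l := div_nonneg (by linarith) (by linarith)
  have h4 : l * (l - 2) / (2 * l - 1) ^ 2 = ((l - 2) / l) * (l / (2 * l - 1)) ^ 2 := by
    field_simp
  rw [F, h4, Real.sqrt_mul h3, Real.sqrt_sq (by positivity)]
  ring

lemma F_nonneg {l : ℝ} (hl : 2 < l) : 0 ≤ F l := by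
  rw [F_eq hl]; exact Real.sqrt_nonneg _

lemma F_pos {l : ℝ} (hl : 2 < l) : 0 < F l := by
  rw [F_eq hl]
  apply Real.sqrt_pos.2
  have h : (0:ℝ) < 2 * l - 1 := by linarith
  have h1 : (0:ℝ) < l := by linarith
  have h2 : (0:ℝ) < l - 2 := by linarith
  positivity

lemma F_le_half {l : ℝ} (hl : 2 < l) : F l ≤ 1 / 2 := by
  rw [F_eq hl]
  have h2 : (0:ℝ) < (2 * l - 1) ^ 2 := by nlinarith
  have harg : l * (l - 2) / (2 * l - 1) ^ 2 ≤ 1 / 4 := by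
    rw [div_le_iff₀ h2]; nlinarith
  calc Real.sqrt (l * (l - 2) / (2 * l - 1) ^ 2) ≤ Real.sqrt (1 / 4) :=
        Real.sqrt_le_sqrt harg
    _ = 1 / 2 := by
        rw [show (1/4 : ℝ) = (1/2)^2 by norm_num, Real.sqrt_sq (by norm_num)]

lemma F_strictMono {a b : ℝ} (ha : 2 < a) (hab : a < b) : F a < F b := by
  have hb : 2 < b := lt_trans ha hab
  rw [F_eq ha, F_eq hb]
  apply Real.sqrt_lt_sqrt
  · have h1 : (0:ℝ) < 2 * a - 1 := by linarith
    have h2 : (0:ℝ) < a := by linarith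
    have h3 : (0:ℝ) ≤ a - 2 := by linarith
    positivity
  · have h1 : (0:ℝ) < (2 * a - 1) ^ 2 := by nlinarith
    have h2 : (0:ℝ) < (2 * b - 1) ^ 2 := by nlinarith
    rw [div_lt_div_iff₀ h1 h2]
    nlinarith [mul_pos (sub_pos.2 hab) (show (0:ℝ) < 4*a*b + a + b - 2 by nlinarith)]

lemma G_nonneg (ν : ℝ) : 0 ≤ G ν := Real.sqrt_nonneg _

lemma G_pos {ν : ℝ} (hν : 2 < ν) : 0 < G ν := by
  apply Real.sqrt_pos.2
  apply div_pos <;> linarith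

lemma G_le_one {ν : ℝ} (hν : 2 < ν) : G ν ≤ 1 := by
  rw [show (1:ℝ) = Real.sqrt 1 by simp]
  apply Real.sqrt_le_sqrt
  rw [div_le_one (by linarith)]; linarith

lemma G_strictMono {a b : ℝ} (ha : 2 < a) (hab : a < b) : G a < G b := by
  have hb : 2 < b := lt_trans ha hab
  apply Real.sqrt_lt_sqrt (div_nonneg (by linarith) (by linarith))
  rw [div_lt_div_iff₀ (by linarith) (by linarith)]
  nlinarith

lemma bounds {l ν : ℝ} (hl : 2 < l) (hν : 2 < ν) :
    -(1/2) ≤ lomaxRhoMin l ν ∧ lomaxRhoMin l ν ≤ 0 := by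
  rw [lomax_eq]
  constructor
  · have : F l * G ν ≤ (1/2) * 1 :=
      mul_le_mul (F_le_half hl) (G_le_one hν) (G_nonneg ν) (by norm_num)
    linarith
  · have : 0 ≤ F l * G ν := mul_nonneg (F_nonneg hl) (G_nonneg ν)
    linarith

lemma tendsto_G : Filter.Tendsto G Filter.atTop (nhds 1) := by
  have h : Filter.Tendsto (fun ν : ℝ => (ν - 2) / ν) Filter.atTop (nhds 1) := by
    have hb : Filter.Tendsto (fun ν : ℝ => 1 - 2 * ν⁻¹) Filter.atTop (nhds 1) := by
      have := tendsto_inv_atTop_zero (𝕜 := ℝ)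
      have h2 := this.const_mul (2:ℝ)
      simpa using tendsto_const_nhds.sub h2
    refine hb.congr' ?_
    filter_upwards [Filter.eventually_gt_atTop (0:ℝ)] with ν hν
    field_simp
  have hsq : Filter.Tendsto Real.sqrt (nhds 1) (nhds 1) := by
    have := Real.continuous_sqrt.tendsto 1
    simpa using this
  exact hsq.comp h

lemma tendsto_F : Filter.Tendsto F Filter.atTop (nhds (1/2)) := by
  have h1 : Filter.Tendsto (fun l : ℝ => l / (2 * l - 1)) Filter.atTop (nhds (1/2)) := by
    have hb : Filter.Tendsto (fun l : ℝ => 2 - l⁻¹) Filter.atTop (nhds 2) := by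
      have := tendsto_inv_atTop_zero (𝕜 := ℝ)
      simpa using tendsto_const_nhds.sub this
    have hi := hb.inv₀ (by norm_num : (2:ℝ) ≠ 0)
    have : (2:ℝ)⁻¹ = 1/2 := by norm_num
    rw [this] at hi
    refine hi.congr' ?_
    filter_upwards [Filter.eventually_gt_atTop (1:ℝ)] with l hl
    have h0 : l ≠ 0 := by linarith
    have h2 : 2 * l - 1 ≠ 0 := by intro h; nlinarith
    rw [show 2 - l⁻¹ = (2 * l - 1) / l by field_simp, inv_div]
  have h2 : Filter.Tendsto (fun l : ℝ => Real.sqrt ((l - 2) / l)) Filter.atTop (nhds 1) :=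
    tendsto_G
  have := h1.mul h2
  rw [show F = fun l : ℝ => l / (2 * l - 1) * Real.sqrt ((l - 2) / l) from rfl]
  simpa using this

lemma tendsto_prod :
    Filter.Tendsto (fun p : ℝ × ℝ => lomaxRhoMin p.1 p.2)
      (Filter.atTop ×ˢ Filter.atTop) (nhds (-(1/2))) := by
  have hF : Filter.Tendsto (fun p : ℝ × ℝ => F p.1)
      (Filter.atTop ×ˢ Filter.atTop) (nhds (1/2)) := tendsto_F.comp Filter.tendsto_fst
  have hG : Filter.Tendsto (fun p : ℝ × ℝ => G p.2)
      (Filter.atTop ×ˢ Filter.atTop) (nhds 1) := tendsto_G.comp Filter.tendsto_snd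
  have := (hF.mul hG).neg
  have h : -(1/2 * 1 : ℝ) = -(1/2) := by norm_num
  rw [h] at this
  refine this.congr ?_
  intro p
  rw [lomax_eq]

end LomaxAux


/-- `ρ_min(λ,ν)` is strictly decreasing in each argument on `(2,∞)`, its
infimum over `λ, ν > 2` equals `−1/2`, it tends to `−1/2` as `λ, ν → ∞`, and
`−1/2 ≤ ρ_min(λ,ν) ≤ 0` for all `λ, ν > 2`. -/
theorem lomax_rhoMin_properties :
    (∀ ν > (2:ℝ), StrictAntiOn (fun l => lomaxRhoMin l ν) (Set.Ioi (2:ℝ))) ∧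
    (∀ l > (2:ℝ), StrictAntiOn (fun ν => lomaxRhoMin l ν) (Set.Ioi (2:ℝ))) ∧
    sInf {r : ℝ | ∃ l ν : ℝ, 2 < l ∧ 2 < ν ∧ r = lomaxRhoMin l ν} = -(1/2) ∧
    Filter.Tendsto (fun p : ℝ × ℝ => lomaxRhoMin p.1 p.2)
      (Filter.atTop ×ˢ Filter.atTop) (nhds (-(1/2))) ∧
    (∀ l > (2:ℝ), ∀ ν > (2:ℝ), -(1/2) ≤ lomaxRhoMin l ν ∧ lomaxRhoMin l ν ≤ 0) := by
  open LomaxAux in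
  refine ⟨?_, ?_, ?_, tendsto_prod, fun l hl ν hν => bounds hl hν⟩
  · intro ν hν a ha b hb hab
    simp only [Set.mem_Ioi] at ha hb
    simp only [lomax_eq]
    have := mul_lt_mul_of_pos_right (F_strictMono ha hab) (G_pos hν)
    linarith
  · intro l hl a ha b hb hab
    simp only [Set.mem_Ioi] at ha hb
    simp only [lomax_eq]
    have := mul_lt_mul_of_pos_left (G_strictMono ha hab) (F_pos hl)
    linarith
  · set S := {r : ℝ | ∃ l ν : ℝ, 2 < l ∧ 2 < ν ∧ r = lomaxRhoMin l ν} with hS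
    have hne : S.Nonempty := ⟨lomaxRhoMin 3 3, 3, 3, by norm_num, by norm_num, rfl⟩
    have hlb : ∀ r ∈ S, -(1/2 : ℝ) ≤ r := by
      rintro r ⟨l, ν, hl, hν, rfl⟩
      exact (bounds hl hν).1
    have hbdd : BddBelow S := ⟨-(1/2), hlb⟩
    refine le_antisymm ?_ (le_csInf hne hlb)
    have hdiag : Filter.Tendsto (fun t : ℝ => lomaxRhoMin t t) Filter.atTop
        (nhds (-(1/2))) :=
      tendsto_prod.comp (Filter.tendsto_id.prodMk Filter.tendsto_id)
    refine ge_of_tendsto hdiag ?_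
    filter_upwards [Filter.eventually_gt_atTop (2:ℝ)] with t ht
    exact csInf_le hbdd ⟨t, t, ht, ht, rfl⟩
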